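/- arXiv:2506.19528 — 5 statements merged into one kernel-verified Lean document; each statement's English description precedes it below -/
import Mathlib

section
/- Let Θ ∈ (0, π) be fixed and define α(q) = 2·arccos((q + cos Θ)/√(q² + 1 + 2q·cos Θ)) for q > 0. Then α is strictly decreasing in q, with limit 2Θ as q → 0⁺ and limit 0 as q → ∞. -/
open Real Filter Set

/-- The angle as a function of the radius ratio `q = r_v / r_w` for fixed
intersection angle `Θ`. -/
noncomputable def ratioAngle (Θ q : ℝ) : ℝ :=
  2 * Real.arccos ((q + Real.cos Θ) /
    Real.sqrt (q ^ 2 + 1 + 2 * q * Real.cos Θ))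

private lemma keyD (Θ q : ℝ) :
    q ^ 2 + 1 + 2 * q * Real.cos Θ = (q + Real.cos Θ) ^ 2 + Real.sin Θ ^ 2 := by
  have h := Real.sin_sq_add_cos_sq Θ
  nlinarith [h]

private lemma gmono {s : ℝ} (hs : 0 < s) :
    StrictMono (fun t : ℝ => t / Real.sqrt (t ^ 2 + s ^ 2)) := by
  intro t1 t2 h
  have hD1 : 0 < Real.sqrt (t1 ^ 2 + s ^ 2) := Real.sqrt_pos.2 (by positivity)
  have hD2 : 0 < Real.sqrt (t2 ^ 2 + s ^ 2) := Real.sqrt_pos.2 (by positivity)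
  have hsq1 : Real.sqrt (t1 ^ 2 + s ^ 2) ^ 2 = t1 ^ 2 + s ^ 2 := Real.sq_sqrt (by positivity)
  have hsq2 : Real.sqrt (t2 ^ 2 + s ^ 2) ^ 2 = t2 ^ 2 + s ^ 2 := Real.sq_sqrt (by positivity)
  simp only
  rw [div_lt_div_iff₀ hD1 hD2]
  rcases le_or_gt 0 t1 with h1 | h1
  · have h2 : 0 < t2 := lt_of_le_of_lt h1 h
    have hsq : (t1 * Real.sqrt (t2 ^ 2 + s ^ 2)) ^ 2 < (t2 * Real.sqrt (t1 ^ 2 + s ^ 2)) ^ 2 := by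
      rw [mul_pow, mul_pow, hsq1, hsq2]
      nlinarith [mul_pos (mul_pos (sub_pos.2 h) (by linarith : (0:ℝ) < t1 + t2)) (mul_pos hs hs)]
    exact lt_of_pow_lt_pow_left₀ 2 (by positivity) hsq
  · rcases le_or_gt t2 0 with h2 | h2
    · have hsq : (-t2 * Real.sqrt (t1 ^ 2 + s ^ 2)) ^ 2 < (-t1 * Real.sqrt (t2 ^ 2 + s ^ 2)) ^ 2 := by
        rw [mul_pow, mul_pow, hsq1, hsq2]
        nlinarith [mul_pos (mul_pos (sub_pos.2 h) (by linarith : (0:ℝ) < -(t1 + t2))) (mul_pos hs hs)]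
      have hb : (0:ℝ) ≤ -t1 * Real.sqrt (t2 ^ 2 + s ^ 2) :=
        mul_nonneg (by linarith) hD2.le
      have := lt_of_pow_lt_pow_left₀ 2 hb hsq
      nlinarith
    · have hL : t1 * Real.sqrt (t2 ^ 2 + s ^ 2) < 0 :=
        mul_neg_of_neg_of_pos h1 hD2
      have hR : 0 < t2 * Real.sqrt (t1 ^ 2 + s ^ 2) := mul_pos h2 hD1
      linarith

private lemma gmem {s : ℝ} (hs : 0 < s) (t : ℝ) :
    t / Real.sqrt (t ^ 2 + s ^ 2) ∈ Set.Icc (-1 : ℝ) 1 := by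
  have hD : 0 < Real.sqrt (t ^ 2 + s ^ 2) := Real.sqrt_pos.2 (by positivity)
  have habs : |t / Real.sqrt (t ^ 2 + s ^ 2)| ≤ 1 := by
    rw [abs_div, abs_of_pos hD, div_le_one hD]
    calc |t| = Real.sqrt (t ^ 2) := (Real.sqrt_sq_eq_abs t).symm
    _ ≤ Real.sqrt (t ^ 2 + s ^ 2) := Real.sqrt_le_sqrt (by nlinarith)
  exact abs_le.1 habs

private lemma ratioAngle_eq (Θ q : ℝ) :
    ratioAngle Θ q = 2 * Real.arccos
      ((q + Real.cos Θ) / Real.sqrt ((q + Real.cos Θ) ^ 2 + Real.sin Θ ^ 2)) := by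
  rw [ratioAngle, keyD]

/-- For fixed `Θ ∈ (0, π)`, the angle `α(q)` is strictly decreasing in `q > 0`,
tends to `2Θ` as `q → 0⁺` and to `0` as `q → ∞`. -/
theorem stmt1 (Θ : ℝ) (hΘ : Θ ∈ Set.Ioo 0 Real.pi) :
    StrictAntiOn (ratioAngle Θ) (Set.Ioi 0) ∧
    Filter.Tendsto (ratioAngle Θ) (nhdsWithin 0 (Set.Ioi 0)) (nhds (2 * Θ)) ∧
    Filter.Tendsto (ratioAngle Θ) Filter.atTop (nhds 0) := by
  have hs : 0 < Real.sin Θ := Real.sin_pos_of_pos_of_lt_pi hΘ.1 hΘ.2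
  refine ⟨?_, ?_, ?_⟩
  · -- strictly decreasing
    intro a _ b _ hab
    rw [ratioAngle_eq, ratioAngle_eq]
    have hmono : (a + Real.cos Θ) / Real.sqrt ((a + Real.cos Θ) ^ 2 + Real.sin Θ ^ 2)
        < (b + Real.cos Θ) / Real.sqrt ((b + Real.cos Θ) ^ 2 + Real.sin Θ ^ 2) :=
      gmono hs (by linarith : a + Real.cos Θ < b + Real.cos Θ)
    have := Real.strictAntiOn_arccos (gmem hs (a + Real.cos Θ)) (gmem hs (b + Real.cos Θ)) hmono
    linarith
  · -- limit at 0⁺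
    have hcont : ContinuousAt (ratioAngle Θ) 0 := by
      unfold ratioAngle
      apply ContinuousAt.mul continuousAt_const
      apply Real.continuous_arccos.continuousAt.comp
      apply ContinuousAt.div
      · exact (continuous_id.add continuous_const).continuousAt
      · exact (Real.continuous_sqrt.comp (by continuity)).continuousAt
      · norm_num
    have hval : ratioAngle Θ 0 = 2 * Θ := by
      rw [ratioAngle]
      norm_num [Real.arccos_cos hΘ.1.le hΘ.2.le]
    rw [← hval]
    exact hcont.tendsto.mono_left nhdsWithin_le_nhds
  · -- limit at ∞
    have hg : Filter.Tendsto (fun t : ℝ => t / Real.sqrt (t ^ 2 + Real.sin Θ ^ 2))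
        Filter.atTop (nhds 1) := by
      have h1 : Filter.Tendsto (fun t : ℝ => t ^ 2 + Real.sin Θ ^ 2) Filter.atTop
          Filter.atTop :=
        Filter.tendsto_atTop_add_const_right _ _ (tendsto_pow_atTop (by norm_num))
      have h2 : Filter.Tendsto (fun t : ℝ => Real.sin Θ ^ 2 / (t ^ 2 + Real.sin Θ ^ 2))
          Filter.atTop (nhds 0) := by
        simpa [div_eq_mul_inv] using h1.inv_tendsto_atTop.const_mul (Real.sin Θ ^ 2)
      have h2' : Filter.Tendsto (fun t : ℝ => 1 - Real.sin Θ ^ 2 / (t ^ 2 + Real.sin Θ ^ 2))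
          Filter.atTop (nhds 1) := by
        simpa using (tendsto_const_nhds (x := (1:ℝ)) (f := Filter.atTop)).sub h2
      have h3 : Filter.Tendsto (fun t : ℝ => Real.sqrt (1 - Real.sin Θ ^ 2 / (t ^ 2 + Real.sin Θ ^ 2)))
          Filter.atTop (nhds 1) := by
        have := ((Real.continuous_sqrt.continuousAt (x := (1:ℝ)))).tendsto.comp h2'
        simpa [Real.sqrt_one, Function.comp_def] using this
      refine h3.congr' ?_
      filter_upwards [Filter.eventually_gt_atTop 0] with t ht
      have hden : 0 < t ^ 2 + Real.sin Θ ^ 2 := by positivity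
      have : 1 - Real.sin Θ ^ 2 / (t ^ 2 + Real.sin Θ ^ 2) = t ^ 2 / (t ^ 2 + Real.sin Θ ^ 2) := by
        field_simp
        ring
      rw [this, Real.sqrt_div (by positivity), Real.sqrt_sq ht.le]
    have harc : Filter.Tendsto
        (fun q : ℝ => (q + Real.cos Θ) / Real.sqrt ((q + Real.cos Θ) ^ 2 + Real.sin Θ ^ 2))
        Filter.atTop (nhds 1) :=
      hg.comp (Filter.tendsto_atTop_add_const_right _ _ Filter.tendsto_id)
    have := ((Real.continuous_arccos.continuousAt (x := (1:ℝ))).tendsto.comp harc).const_mul 2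
    simp only [Real.arccos_one, mul_zero] at this
    have heq : ∀ q, ratioAngle Θ q = 2 * Real.arccos
        ((q + Real.cos Θ) / Real.sqrt ((q + Real.cos Θ) ^ 2 + Real.sin Θ ^ 2)) :=
      fun q => ratioAngle_eq Θ q
    exact this.congr (fun q => (heq q).symm)
end

section
/- Let Θ ∈ (0, π) be a fixed angle and for q > 0 set α(q) = 2·arccos((q + cos Θ)/√(q² + 1 + 2q cos Θ)). If u = ln q then dα/du < 0; moreover the partial derivative of α with respect to the conformal factor of the other circle, namely -dα/du evaluated via the ratio, is positive. -/
lemma ratioAngle_hasDerivAt (Θ q : ℝ) (hΘ : Θ ∈ Set.Ioo 0 Real.pi) (hq : 0 < q) :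
    ∃ D, D < 0 ∧ HasDerivAt (ratioAngle Θ) D q := by
  set c := Real.cos Θ with hc
  have hsin : 0 < Real.sin Θ := Real.sin_pos_of_pos_of_lt_pi hΘ.1 hΘ.2
  have hc2 : 1 - c ^ 2 > 0 := by
    have := Real.sin_sq_add_cos_sq Θ
    nlinarith
  set s := q ^ 2 + 1 + 2 * q * c with hsdef
  have hs : 0 < s := by nlinarith [sq_nonneg (q + c)]
  have hrs : 0 < Real.sqrt s := Real.sqrt_pos.2 hs
  have hr2 : Real.sqrt s ^ 2 = s := Real.sq_sqrt hs.le
  set f := (q + c) / Real.sqrt s with hfdef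
  have hlt : (q + c) ^ 2 < s := by nlinarith
  have hf2 : f ^ 2 < 1 := by
    rw [hfdef, div_pow, hr2, div_lt_one hs]
    exact hlt
  have hfm : f ≠ -1 := by
    intro h; rw [h] at hf2; norm_num at hf2
  have hfp : f ≠ 1 := by
    intro h; rw [h] at hf2; norm_num at hf2
  -- derivative of inner quadratic
  have h1 : HasDerivAt (fun x : ℝ => x ^ 2 + 1 + 2 * x * c) (2 * q + 2 * c) q := by
    have := ((hasDerivAt_pow 2 q).add_const 1).add
      (((hasDerivAt_id q).const_mul 2).mul_const c)
    convert this using 1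
    · rfl
    · rfl
    · rfl
    · simp
  have hsne : q ^ 2 + 1 + 2 * q * c ≠ 0 := by rw [← hsdef]; exact hs.ne'
  have h2 : HasDerivAt (fun x : ℝ => Real.sqrt (x ^ 2 + 1 + 2 * x * c))
      ((2 * q + 2 * c) / (2 * Real.sqrt s)) q := by
    have := h1.sqrt hsne
    convert this using 2
  have h3 : HasDerivAt (fun x : ℝ => x + c) 1 q := (hasDerivAt_id q).add_const c
  have h4 : HasDerivAt (fun x : ℝ => (x + c) / Real.sqrt (x ^ 2 + 1 + 2 * x * c))
      ((1 * Real.sqrt s - (q + c) * ((2 * q + 2 * c) / (2 * Real.sqrt s))) /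
        Real.sqrt s ^ 2) q := by
    have := h3.div h2 hrs.ne'
    convert this using 2
    all_goals rfl
  have hDval : (1 * Real.sqrt s - (q + c) * ((2 * q + 2 * c) / (2 * Real.sqrt s))) /
      Real.sqrt s ^ 2 = (1 - c ^ 2) / (s * Real.sqrt s) := by
    have hrr : Real.sqrt s * Real.sqrt s = s := Real.mul_self_sqrt hs.le
    rw [hr2]
    field_simp
    linear_combination hr2 + hsdef
  have hf' : HasDerivAt (fun x : ℝ => (x + c) / Real.sqrt (x ^ 2 + 1 + 2 * x * c))
      ((1 - c ^ 2) / (s * Real.sqrt s)) q := hDval ▸ h4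
  have harccos : HasDerivAt Real.arccos (-(1 / Real.sqrt (1 - f ^ 2))) f :=
    Real.hasDerivAt_arccos hfm hfp
  have hcomp := (harccos.comp q hf').const_mul 2
  refine ⟨2 * (-(1 / Real.sqrt (1 - f ^ 2)) * ((1 - c ^ 2) / (s * Real.sqrt s))), ?_, ?_⟩
  · have h5 : 0 < Real.sqrt (1 - f ^ 2) := Real.sqrt_pos.2 (by linarith)
    have h6 : 0 < (1 - c ^ 2) / (s * Real.sqrt s) := by positivity
    have h7 : 0 < 1 / Real.sqrt (1 - f ^ 2) := by positivity
    nlinarith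
  · exact hcomp

/-- In terms of the discrete conformal factors `u_v = ln r_v`, `u_w = ln r_w`
(so that `q = e^{u_v - u_w}`), the angle `α_v^w` satisfies
`∂α/∂u_v < 0` and `∂α/∂u_w > 0`. -/
theorem stmt2 (Θ : ℝ) (hΘ : Θ ∈ Set.Ioo 0 Real.pi) (uv uw : ℝ) :
    deriv (fun u => ratioAngle Θ (Real.exp (u - uw))) uv < 0 ∧
    0 < deriv (fun u => ratioAngle Θ (Real.exp (uv - u))) uw := by
  obtain ⟨D, hD, hder⟩ := ratioAngle_hasDerivAt Θ (Real.exp (uv - uw)) hΘ (Real.exp_pos _)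
  constructor
  · have hexp : HasDerivAt (fun u : ℝ => Real.exp (u - uw)) (Real.exp (uv - uw)) uv := by
      have := ((hasDerivAt_id uv).sub_const uw).exp
      simpa using this
    have h : HasDerivAt (fun u => ratioAngle Θ (Real.exp (u - uw)))
        (D * Real.exp (uv - uw)) uv := HasDerivAt.comp (h₂ := ratioAngle Θ) uv hder hexp
    rw [h.deriv]
    exact mul_neg_of_neg_of_pos hD (Real.exp_pos _)
  · have hexp : HasDerivAt (fun u : ℝ => Real.exp (uv - u)) (Real.exp (uv - uw) * (-1)) uw := by
      have hin : HasDerivAt (fun u : ℝ => uv - u) (-1) uw := by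
        simpa using (hasDerivAt_id uw).const_sub uv
      exact hin.exp
    have h : HasDerivAt (fun u => ratioAngle Θ (Real.exp (uv - u)))
        (D * (Real.exp (uv - uw) * (-1))) uw := HasDerivAt.comp (h₂ := ratioAngle Θ) uw hder hexp
    rw [h.deriv]
    have : D * (Real.exp (uv - uw) * (-1)) = -(D * Real.exp (uv - uw)) := by ring
    rw [this]
    exact neg_pos.2 (mul_neg_of_neg_of_pos hD (Real.exp_pos _))
end

section
/- Let V₁, V₂, …, V_{2m} be mutually disjoint nonempty subsets of vertices of a connected graph G such that for i₁ < i₂ < i₃, the set V_{i₂} separates V_{i₁} from V_{i₃} (every path from V_{i₁} to V_{i₃} meets V_{i₂}). Then VEL(V₁, V_{2m}) ≥ Σ_{k=1}^{m} VEL(V_{2k−1}, V_{2k}). -/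
open scoped ENNReal

/-- A vertex curve in the graph `G`: a nonempty list of vertices in which
consecutive vertices are adjacent. -/
def IsCurve {V : Type*} (G : SimpleGraph V) (γ : List V) : Prop :=
  γ ≠ [] ∧ γ.Chain' G.Adj

/-- A curve connecting the vertex set `A` to the vertex set `B`. -/
def ConnectsSets {V : Type*} (G : SimpleGraph V) (A B : Set V) (γ : List V) : Prop :=
  IsCurve G γ ∧ (∃ a ∈ A, γ.head? = some a) ∧ (∃ b ∈ B, γ.getLast? = some b)

/-- The vertex module of a family `Γ` of vertex curves: the infimum of the
area `Σ_v m(v)²` over all `Γ`-admissible vertex metrics `m`. -/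
noncomputable def MOD {V : Type*} (Γ : Set (List V)) : ℝ≥0∞ :=
  ⨅ m ∈ {m : V → ℝ≥0∞ | ∀ γ ∈ Γ, 1 ≤ (γ.map m).sum}, ∑' v, (m v) ^ 2

/-- The vertex extremal length of a family of vertex curves. -/
noncomputable def VEL {V : Type*} (Γ : Set (List V)) : ℝ≥0∞ := (MOD Γ)⁻¹

/-- The vertex extremal length between two vertex sets, over the family of
curves connecting them. -/
noncomputable def VELbetween {V : Type*} (G : SimpleGraph V) (A B : Set V) : ℝ≥0∞ :=
  VEL {γ | ConnectsSets G A B γ}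

section Auxiliary

variable {V : Type*}

private lemma aux_getLast?_append_cons {α : Type*} (π l : List α) (a : α) :
    (π ++ a :: l).getLast? = (a :: l).getLast? := by
  rw [List.getLast?_append]
  cases h : (a :: l).getLast? with
  | none => simp [List.getLast?_cons] at h
  | some w => simp [Option.or]

private lemma aux_walk_head {G : SimpleGraph V} {u v : V} (w : G.Walk u v) :
    w.support.head? = some u := by
  cases w <;> simp [SimpleGraph.Walk.support]

private lemma aux_walk_last {G : SimpleGraph V} {u v : V} (w : G.Walk u v) :
    w.support.getLast? = some v := by
  induction w with
  | nil => simp [SimpleGraph.Walk.support]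
  | cons h p ih => simp [SimpleGraph.Walk.support_cons, List.getLast?_cons, ih]

private lemma aux_exists_connects {G : SimpleGraph V} (hconn : G.Connected)
    {A B : Set V} (hA : A.Nonempty) (hB : B.Nonempty) :
    ∃ γ, ConnectsSets G A B γ := by
  obtain ⟨a, ha⟩ := hA
  obtain ⟨b, hb⟩ := hB
  obtain ⟨w⟩ := hconn a b
  exact ⟨w.support, ⟨w.support_ne_nil, w.isChain_adj_support⟩,
    ⟨a, ha, aux_walk_head w⟩, ⟨b, hb, aux_walk_last w⟩⟩

private lemma aux_inv_mul_le_one (x : ℝ≥0∞) : x⁻¹ * x ≤ 1 := by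
  rcases eq_or_ne x 0 with rfl | h0
  · simp
  · rcases eq_or_ne x ⊤ with rfl | ht
    · simp
    · rw [ENNReal.inv_mul_cancel h0 ht]

/-- The core decomposition lemma: if `ρ` gives every curve connecting
`V_{2k-1}` to `V_{2k}` total mass at least `lam k`, then every curve connecting
`V_{2k-1}` to `V_{2m}` has total mass at least `∑_{j=k}^m lam j`. -/
private lemma aux_seg (G : SimpleGraph V) (m : ℕ) (Vs : ℕ → Set V)
    (hdisj : ∀ i ∈ Finset.Icc 1 (2 * m), ∀ j ∈ Finset.Icc 1 (2 * m),
      i ≠ j → Disjoint (Vs i) (Vs j))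
    (hsep : ∀ i₁ ∈ Finset.Icc 1 (2 * m), ∀ i₂ ∈ Finset.Icc 1 (2 * m),
      ∀ i₃ ∈ Finset.Icc 1 (2 * m), i₁ < i₂ → i₂ < i₃ →
      ∀ γ, ConnectsSets G (Vs i₁) (Vs i₃) γ → ∃ v ∈ γ, v ∈ Vs i₂)
    (ρ : V → ℝ≥0∞) (lam : ℕ → ℝ≥0∞)
    (hadm : ∀ k ∈ Finset.Icc 1 m, ∀ γ, ConnectsSets G (Vs (2 * k - 1)) (Vs (2 * k)) γ →
      lam k ≤ (γ.map ρ).sum) :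
    ∀ n k, 1 ≤ k → k + n = m → ∀ σ, ConnectsSets G (Vs (2 * k - 1)) (Vs (2 * m)) σ →
      ∑ j ∈ Finset.Icc k m, lam j ≤ (σ.map ρ).sum := by
  intro n
  induction n with
  | zero =>
    intro k hk1 hk2 σ hσ
    obtain rfl : k = m := by omega
    rw [Finset.Icc_self, Finset.sum_singleton]
    exact hadm k (Finset.mem_Icc.mpr ⟨hk1, le_rfl⟩) σ hσ
  | succ n ih =>
    intro k hk1 hk2 σ hσ
    obtain ⟨⟨hσne, hσch⟩, ⟨a, ha, hhead⟩, ⟨z, hz, hlast⟩⟩ := hσ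
    have hmem1 : 2 * k - 1 ∈ Finset.Icc 1 (2 * m) := by simp only [Finset.mem_Icc]; omega
    have hmem2 : 2 * k ∈ Finset.Icc 1 (2 * m) := by simp only [Finset.mem_Icc]; omega
    have hmem3 : 2 * k + 1 ∈ Finset.Icc 1 (2 * m) := by simp only [Finset.mem_Icc]; omega
    have hmem4 : 2 * m ∈ Finset.Icc 1 (2 * m) := by simp only [Finset.mem_Icc]; omega
    obtain ⟨b, hbσ, hbV⟩ := hsep _ hmem1 _ hmem2 _ hmem4 (by omega) (by omega) σ
      ⟨⟨hσne, hσch⟩, ⟨a, ha, hhead⟩, ⟨z, hz, hlast⟩⟩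
    obtain ⟨π, τ, rfl⟩ := List.append_of_mem hbσ
    have hδ : ConnectsSets G (Vs (2 * k - 1)) (Vs (2 * k)) (π ++ [b]) := by
      refine ⟨⟨by simp, hσch.prefix ⟨τ, by simp⟩⟩, ⟨a, ha, ?_⟩, ⟨b, hbV, List.getLast?_concat⟩⟩
      rw [show (π ++ [b]).head? = (π ++ b :: τ).head? by cases π <;> simp]
      exact hhead
    have hσ₁last : (b :: τ).getLast? = some z := by
      rwa [aux_getLast?_append_cons] at hlast
    obtain ⟨c, hcσ₁, hcV⟩ := hsep _ hmem2 _ hmem3 _ hmem4 (by omega) (by omega) (b :: τ)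
      ⟨⟨by simp, hσch.suffix ⟨π, rfl⟩⟩, ⟨b, hbV, rfl⟩, ⟨z, hz, hσ₁last⟩⟩
    have hcb : c ≠ b := by
      rintro rfl
      exact (Set.disjoint_left.mp (hdisj _ hmem2 _ hmem3 (by omega)) hbV) hcV
    have hcτ : c ∈ τ := by
      rcases List.mem_cons.mp hcσ₁ with h | h
      · exact absurd h hcb
      · exact h
    obtain ⟨π', τ', rfl⟩ := List.append_of_mem hcτ
    have hσ₂ : ConnectsSets G (Vs (2 * (k + 1) - 1)) (Vs (2 * m)) (c :: τ') := by
      have h21 : 2 * (k + 1) - 1 = 2 * k + 1 := by omega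
      rw [h21]
      refine ⟨⟨by simp, hσch.suffix ⟨π ++ b :: π', by simp⟩⟩, ⟨c, hcV, rfl⟩, ⟨z, hz, ?_⟩⟩
      rw [show (b :: (π' ++ c :: τ')) = (b :: π') ++ (c :: τ') by simp] at hσ₁last
      rwa [aux_getLast?_append_cons] at hσ₁last
    have h1 : lam k ≤ ((π ++ [b]).map ρ).sum :=
      hadm k (by simp only [Finset.mem_Icc]; omega) _ hδ
    have h2 : ∑ j ∈ Finset.Icc (k + 1) m, lam j ≤ ((c :: τ').map ρ).sum :=
      ih (k + 1) (by omega) (by omega) _ hσ₂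
    have hins : Finset.Icc k m = insert k (Finset.Icc (k + 1) m) := by
      ext x; simp only [Finset.mem_Icc, Finset.mem_insert]; omega
    rw [hins, Finset.sum_insert (by simp only [Finset.mem_Icc]; omega)]
    calc lam k + ∑ j ∈ Finset.Icc (k + 1) m, lam j
        ≤ ((π ++ [b]).map ρ).sum + ((c :: τ').map ρ).sum := add_le_add h1 h2
      _ ≤ ((π ++ b :: (π' ++ c :: τ')).map ρ).sum := by
          simp only [List.map_append, List.sum_append, List.map_cons, List.sum_cons,
            List.map_nil, List.sum_nil, add_zero]
          rw [add_assoc]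
          exact add_le_add_right (add_le_add_right le_add_self _) _

/-- Key analytic lemma: given admissible metrics `M k` for each of the pair
families, the sum of the reciprocals of their areas bounds `(MOD Γ)⁻¹`. -/
private lemma aux_key (G : SimpleGraph V) (hconn : G.Connected)
    (m : ℕ) (hm : 0 < m) (Vs : ℕ → Set V)
    (hne : ∀ i ∈ Finset.Icc 1 (2 * m), (Vs i).Nonempty)
    (hdisj : ∀ i ∈ Finset.Icc 1 (2 * m), ∀ j ∈ Finset.Icc 1 (2 * m),
      i ≠ j → Disjoint (Vs i) (Vs j))
    (hsep : ∀ i₁ ∈ Finset.Icc 1 (2 * m), ∀ i₂ ∈ Finset.Icc 1 (2 * m),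
      ∀ i₃ ∈ Finset.Icc 1 (2 * m), i₁ < i₂ → i₂ < i₃ →
      ∀ γ, ConnectsSets G (Vs i₁) (Vs i₃) γ → ∃ v ∈ γ, v ∈ Vs i₂)
    (M : ℕ → V → ℝ≥0∞)
    (hM : ∀ k ∈ Finset.Icc 1 m, ∀ γ, ConnectsSets G (Vs (2 * k - 1)) (Vs (2 * k)) γ →
      1 ≤ (γ.map (M k)).sum)
    (A : ℕ → ℝ≥0∞) (hA : ∀ k, A k = ∑' v, (M k v) ^ 2) :
    ∑ k ∈ Finset.Icc 1 m, (A k)⁻¹ ≤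
      (MOD {γ | ConnectsSets G (Vs 1) (Vs (2 * m)) γ})⁻¹ := by
  by_cases hT0 : ∑ k ∈ Finset.Icc 1 m, (A k)⁻¹ = 0
  · rw [hT0]; exact zero_le
  set T := ∑ k ∈ Finset.Icc 1 m, (A k)⁻¹ with hTdef
  have hak : ∀ k ∈ Finset.Icc 1 m, A k ≠ 0 := by
    intro k hk h0
    rw [hA k] at h0
    have hM0 : ∀ v, M k v = 0 := by
      intro v
      have := ENNReal.tsum_eq_zero.mp h0 v
      simpa [pow_eq_zero_iff] using this
    have h1 : 2 * k - 1 ∈ Finset.Icc 1 (2 * m) := by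
      simp only [Finset.mem_Icc] at hk ⊢; omega
    have h2 : 2 * k ∈ Finset.Icc 1 (2 * m) := by
      simp only [Finset.mem_Icc] at hk ⊢; omega
    obtain ⟨γ, hγ⟩ := aux_exists_connects hconn (hne _ h1) (hne _ h2)
    have hle := hM k hk γ hγ
    have hz : (γ.map (M k)).sum = 0 := by
      refine List.sum_eq_zero ?_
      intro x hx
      obtain ⟨v, _, rfl⟩ := List.mem_map.mp hx
      exact hM0 v
    rw [hz] at hle
    simp at hle
  have hTtop : T ≠ ⊤ := by
    refine (ENNReal.sum_lt_top.mpr ?_).ne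
    intro k hk
    exact ENNReal.inv_lt_top.mpr (zero_lt_iff.mpr (hak k hk))
  set lam : ℕ → ℝ≥0∞ := fun k => (A k)⁻¹ * T⁻¹ with hlam
  set ρ : V → ℝ≥0∞ := fun v => (Finset.Icc 1 m).sup (fun k => lam k * M k v) with hρ
  have hsum_lam : ∑ k ∈ Finset.Icc 1 m, lam k = 1 := by
    rw [hlam]
    rw [← Finset.sum_mul, ← hTdef]
    exact ENNReal.mul_inv_cancel hT0 hTtop
  have hadm : ∀ k ∈ Finset.Icc 1 m, ∀ γ, ConnectsSets G (Vs (2 * k - 1)) (Vs (2 * k)) γ →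
      lam k ≤ (γ.map ρ).sum := by
    intro k hk γ hγ
    calc lam k = lam k * 1 := (mul_one _).symm
      _ ≤ lam k * (γ.map (M k)).sum := by gcongr; exact hM k hk γ hγ
      _ = (γ.map (fun v => lam k * M k v)).sum := (List.sum_map_mul_left γ (M k) (lam k)).symm
      _ ≤ (γ.map ρ).sum := by
          refine List.sum_le_sum ?_
          intro v _
          rw [hρ]
          exact Finset.le_sup (f := fun k => lam k * M k v) hk
  have hadm' : ρ ∈ {mm : V → ℝ≥0∞ |
      ∀ γ ∈ {γ | ConnectsSets G (Vs 1) (Vs (2 * m)) γ}, 1 ≤ (γ.map mm).sum} := by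
    intro γ hγ
    have hγ' : ConnectsSets G (Vs (2 * 1 - 1)) (Vs (2 * m)) γ := by
      simpa using hγ
    have h := aux_seg G m Vs hdisj hsep ρ lam hadm (m - 1) 1 le_rfl (by omega) γ hγ'
    rwa [hsum_lam] at h
  have hMOD : MOD {γ | ConnectsSets G (Vs 1) (Vs (2 * m)) γ} ≤ T⁻¹ := by
    refine le_trans (iInf₂_le ρ hadm') ?_
    have hpt : ∀ v, ρ v ^ 2 ≤ ∑ k ∈ Finset.Icc 1 m, (lam k * M k v) ^ 2 := by
      intro v
      obtain ⟨k₀, hk₀, hk₀eq⟩ := Finset.exists_mem_eq_sup (Finset.Icc 1 m)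
        ⟨1, by simp only [Finset.mem_Icc]; omega⟩ (fun k => lam k * M k v)
      calc ρ v ^ 2 = (lam k₀ * M k₀ v) ^ 2 := by simp only [hρ]; rw [hk₀eq]
        _ ≤ ∑ k ∈ Finset.Icc 1 m, (lam k * M k v) ^ 2 :=
            Finset.single_le_sum (f := fun k => (lam k * M k v) ^ 2)
              (fun _ _ => zero_le) hk₀
    calc (∑' v, ρ v ^ 2)
        ≤ ∑' v, ∑ k ∈ Finset.Icc 1 m, (lam k * M k v) ^ 2 := ENNReal.tsum_le_tsum hpt
      _ = ∑ k ∈ Finset.Icc 1 m, ∑' v, (lam k * M k v) ^ 2 :=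
          Summable.tsum_finsetSum (fun _ _ => ENNReal.summable)
      _ = ∑ k ∈ Finset.Icc 1 m, lam k ^ 2 * A k := by
          refine Finset.sum_congr rfl fun k _ => ?_
          simp_rw [mul_pow]
          rw [ENNReal.tsum_mul_left, hA k]
      _ ≤ ∑ k ∈ Finset.Icc 1 m, (A k)⁻¹ * (T⁻¹ * T⁻¹) := by
          refine Finset.sum_le_sum fun k _ => ?_
          rw [hlam]
          calc ((A k)⁻¹ * T⁻¹) ^ 2 * A k
              = ((A k)⁻¹ * ((A k)⁻¹ * A k)) * (T⁻¹ * T⁻¹) := by ring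
            _ ≤ ((A k)⁻¹ * 1) * (T⁻¹ * T⁻¹) := by
                gcongr
                exact aux_inv_mul_le_one _
            _ = (A k)⁻¹ * (T⁻¹ * T⁻¹) := by rw [mul_one]
      _ = T * (T⁻¹ * T⁻¹) := by rw [← Finset.sum_mul, ← hTdef]
      _ = (T * T⁻¹) * T⁻¹ := by ring
      _ = T⁻¹ := by rw [ENNReal.mul_inv_cancel hT0 hTtop, one_mul]
  calc T = (T⁻¹)⁻¹ := by rw [inv_inv]
    _ ≤ (MOD {γ | ConnectsSets G (Vs 1) (Vs (2 * m)) γ})⁻¹ := ENNReal.inv_le_inv' hMOD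

/-- Exchanging a finite sum and suprema in `ℝ≥0∞`. -/
private lemma aux_sum_iSup {ι : Type*} (s : Finset ι) {κ : ι → Type*} [∀ i, Nonempty (κ i)]
    (f : ∀ i, κ i → ℝ≥0∞) :
    ∑ i ∈ s, ⨆ j, f i j ≤ ⨆ g : ∀ i, κ i, ∑ i ∈ s, f i (g i) := by
  classical
  induction s using Finset.induction_on with
  | empty => simp
  | @insert a s ha ih =>
    rw [Finset.sum_insert ha, ENNReal.iSup_add]
    refine iSup_le fun j => ?_
    refine le_trans (add_le_add_right ih _) ?_
    rw [ENNReal.add_iSup]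
    refine iSup_le fun g => ?_
    refine le_trans (le_of_eq ?_) (le_iSup _ (Function.update g a j))
    rw [Finset.sum_insert ha, Function.update_self]
    congr 1
    exact Finset.sum_congr rfl fun i hi => by
      rw [Function.update_of_ne (by rintro rfl; exact ha hi)]

end Auxiliary
/-- Serial rule for vertex extremal length: if `V₁, …, V_{2m}` are mutually
disjoint nonempty vertex sets such that `V_{i₂}` separates `V_{i₁}` from
`V_{i₃}` whenever `i₁ < i₂ < i₃`, then
`VEL(V₁, V_{2m}) ≥ Σ_{k=1}^{m} VEL(V_{2k-1}, V_{2k})`. -/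
theorem stmt7 {V : Type*} (G : SimpleGraph V) (hconn : G.Connected)
    (m : ℕ) (hm : 0 < m) (Vs : ℕ → Set V)
    (hne : ∀ i ∈ Finset.Icc 1 (2 * m), (Vs i).Nonempty)
    (hdisj : ∀ i ∈ Finset.Icc 1 (2 * m), ∀ j ∈ Finset.Icc 1 (2 * m),
      i ≠ j → Disjoint (Vs i) (Vs j))
    (hsep : ∀ i₁ ∈ Finset.Icc 1 (2 * m), ∀ i₂ ∈ Finset.Icc 1 (2 * m),
      ∀ i₃ ∈ Finset.Icc 1 (2 * m), i₁ < i₂ → i₂ < i₃ →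
      ∀ γ, ConnectsSets G (Vs i₁) (Vs i₃) γ → ∃ v ∈ γ, v ∈ Vs i₂) :
    ∑ k ∈ Finset.Icc 1 m, VELbetween G (Vs (2 * k - 1)) (Vs (2 * k)) ≤
      VELbetween G (Vs 1) (Vs (2 * m)) := by
  classical
  -- the subtype of admissible metrics for the pair family `k`
  let κ : ℕ → Type _ := fun k => {f : V → ℝ≥0∞ //
    f ∈ {mm : V → ℝ≥0∞ |
      ∀ γ ∈ {γ | ConnectsSets G (Vs (2 * k - 1)) (Vs (2 * k)) γ}, 1 ≤ (γ.map mm).sum}}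
  have hκne : ∀ k, Nonempty (κ k) := by
    intro k
    refine ⟨⟨fun _ => 1, ?_⟩⟩
    intro γ hγ
    have hne' : γ ≠ [] := hγ.1.1
    have hlen : (γ.map (fun _ => (1 : ℝ≥0∞))).sum = γ.length := by simp
    rw [hlen]
    exact_mod_cast Nat.one_le_cast.mpr (List.length_pos_iff.mpr hne')
  have hrw : ∀ k ∈ Finset.Icc 1 m, VELbetween G (Vs (2 * k - 1)) (Vs (2 * k)) =
      ⨆ p : κ k, (∑' v, ((p : V → ℝ≥0∞) v) ^ 2)⁻¹ := by
    intro k _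
    rw [VELbetween, VEL, MOD, iInf_subtype', ENNReal.inv_iInf]
  rw [Finset.sum_congr rfl hrw]
  have : ∀ g : ∀ k, κ k, ∑ k ∈ Finset.Icc 1 m, (∑' v, (((g k) : V → ℝ≥0∞) v) ^ 2)⁻¹ ≤
      VELbetween G (Vs 1) (Vs (2 * m)) := by
    intro g
    exact aux_key G hconn m hm Vs hne hdisj hsep (fun k => (g k : V → ℝ≥0∞))
      (fun k hk γ hγ => (g k).2 γ hγ)
      (fun k => ∑' v, ((g k : V → ℝ≥0∞) v) ^ 2) (fun k => rfl)
  exact le_trans (aux_sum_iSup (Finset.Icc 1 m) (fun k (p : κ k) => (∑' v, ((p : V → ℝ≥0∞) v) ^ 2)⁻¹))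
    (iSup_le this)
end

section
/- Let D = (V, E, F) be a finite disk cellular decomposition, Θ : E → (0, π) satisfying the face condition (C₁), and let A be a nonempty subset of interior vertices such that the subcomplex S(A) spanned by the faces incident to A is connected and simply connected (Euler characteristic 1). Then 2π|A| − 2·Σ_{e ∈ E(A)} Θ(e) = 2π + Σ_{(e,f) ∈ Lk(A)} (Θ(e) − π), where E(A) is the set of edges incident to A and Lk(A) is the set of pairs (e, f) with f a face incident to A, e a boundary edge of f not incident to A. -/
lemma aux9 {E F : Type*} [DecidableEq E] (s : Finset E) (t : Finset F)
    (bd : F → Finset E) (g : E → ℝ) :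
    ∑ p ∈ (s ×ˢ t).filter (fun p : E × F => p.1 ∈ bd p.2), g p.1 =
      ∑ e ∈ s, ((t.filter (fun f => e ∈ bd f)).card : ℝ) * g e := by
  rw [Finset.sum_filter, Finset.sum_product]
  congr 1
  ext e
  rw [← Finset.sum_filter]
  simp [Finset.sum_const, mul_comm]

/-- Combinatorial identity for a set `A` of interior vertices of a finite disk
cellular decomposition.  Here `a = |A|`, `EA = E(A)` is the set of edges
incident to `A`, `FA = F(A)` the set of faces incident to `A`, `bd f` is the
set of boundary edges of the face `f`, `Θ` is the angle function.
Hypotheses: the face condition `(C₁)` holds on every face of `F(A)`, each edge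
of `E(A)` lies on the boundary of exactly two faces of `F(A)`, and the spanned
subcomplex `S(A)` has Euler characteristic `|A| - |E(A)| + |F(A)| = 1`.
Conclusion:
`2π|A| − 2·Σ_{e ∈ E(A)} Θ(e) = 2π + Σ_{(e,f) ∈ Lk(A)} (Θ(e) − π)`. -/
theorem stmt9 {E F : Type*} [DecidableEq E] [DecidableEq F] [Fintype E] [Fintype F]
    (Θ : E → ℝ) (bd : F → Finset E)
    (a : ℕ) (ha : 0 < a) (EA : Finset E) (FA : Finset F)
    (hC1 : ∀ f ∈ FA, ∑ e ∈ bd f, (Real.pi - Θ e) = 2 * Real.pi)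
    (hTwo : ∀ e ∈ EA, (FA.filter (fun f => e ∈ bd f)).card = 2)
    (hEuler : (a : ℤ) - EA.card + FA.card = 1) :
    2 * Real.pi * a - 2 * ∑ e ∈ EA, Θ e =
      2 * Real.pi +
        ∑ p ∈ ((Finset.univ \ EA) ×ˢ FA).filter (fun p : E × F => p.1 ∈ bd p.2),
          (Θ p.1 - Real.pi) := by
  set g : E → ℝ := fun e => Real.pi - Θ e with hg
  set c : E → ℝ := fun e => ((FA.filter (fun f => e ∈ bd f)).card : ℝ) * g e with hc
  -- total sum over all faces
  have htot : ∑ e : E, c e = 2 * Real.pi * FA.card := by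
    have h1 := aux9 (Finset.univ : Finset E) FA bd g
    have h2 : ∑ p ∈ ((Finset.univ : Finset E) ×ˢ FA).filter
        (fun p : E × F => p.1 ∈ bd p.2), g p.1 = ∑ f ∈ FA, ∑ e ∈ bd f, g e := by
      rw [Finset.sum_filter, Finset.sum_product_right]
      congr 1
      ext f
      rw [← Finset.sum_filter]
      congr 1
      ext e
      simp
    rw [← h1, h2, Finset.sum_congr rfl hC1, Finset.sum_const, nsmul_eq_mul, mul_comm]
  -- split univ into EA and its complement
  have hsplit : ∑ e ∈ (Finset.univ \ EA), c e + ∑ e ∈ EA, c e = ∑ e : E, c e :=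
    Finset.sum_sdiff (Finset.subset_univ EA)
  have hEA : ∑ e ∈ EA, c e = 2 * ((EA.card : ℝ) * Real.pi - ∑ e ∈ EA, Θ e) := by
    have : ∀ e ∈ EA, c e = 2 * (Real.pi - Θ e) := by
      intro e he
      simp only [hc, hTwo e he]
      norm_num
      rfl
    rw [Finset.sum_congr rfl this, ← Finset.mul_sum, Finset.sum_sub_distrib,
      Finset.sum_const, nsmul_eq_mul]
  have hcomp : ∑ e ∈ (Finset.univ \ EA), c e =
      ∑ p ∈ ((Finset.univ \ EA) ×ˢ FA).filter (fun p : E × F => p.1 ∈ bd p.2), g p.1 :=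
    (aux9 _ FA bd g).symm
  have hneg : ∑ p ∈ ((Finset.univ \ EA) ×ˢ FA).filter (fun p : E × F => p.1 ∈ bd p.2),
      g p.1 = - ∑ p ∈ ((Finset.univ \ EA) ×ˢ FA).filter (fun p : E × F => p.1 ∈ bd p.2),
      (Θ p.1 - Real.pi) := by
    rw [← Finset.sum_neg_distrib]
    congr 1
    ext p
    simp [hg]
  have hE : (EA.card : ℝ) - FA.card = (a : ℝ) - 1 := by
    have : ((a : ℤ) : ℝ) - EA.card + FA.card = 1 := by exact_mod_cast congrArg (Int.cast : ℤ → ℝ) hEuler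
    push_cast at this ⊢
    linarith
  rw [hcomp, hEA, htot, hneg] at hsplit
  have hE2 : (EA.card : ℝ) * Real.pi = (a : ℝ) * Real.pi - Real.pi + FA.card * Real.pi := by
    have h3 : (EA.card : ℝ) = (a : ℝ) - 1 + FA.card := by linarith
    rw [h3]; ring
  linarith
end

section
/- For fixed Θ ∈ (0, π − ε] and the Euclidean angle function α(q) = 2 arccos((q + cos Θ)/√(q² + 1 + 2q cos Θ)) with q = e^{u_v − u_w}, the derivative ∂α/∂u_w satisfies 0 < ∂α/∂u_w ≤ C·α, where C depends only on ε. -/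
open Real

lemma Dpos {Θ : ℝ} (q : ℝ) (hs : 0 < Real.sin Θ) :
    0 < q ^ 2 + 1 + 2 * q * Real.cos Θ := by
  nlinarith [Real.sin_sq_add_cos_sq Θ, sq_nonneg (q + Real.cos Θ)]

lemma hasDeriv_ratioAngle {Θ : ℝ} (hΘ : Θ ∈ Set.Ioo 0 Real.pi) (q : ℝ) :
    HasDerivAt (fun x => ratioAngle Θ x)
      (-(2 * Real.sin Θ / (q ^ 2 + 1 + 2 * q * Real.cos Θ))) q := by
  have hs : 0 < Real.sin Θ := Real.sin_pos_of_pos_of_lt_pi hΘ.1 hΘ.2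
  set c := Real.cos Θ with hc
  set D := q ^ 2 + 1 + 2 * q * c with hDdef
  have hD : 0 < D := Dpos q hs
  have ht : 0 < Real.sqrt D := Real.sqrt_pos.2 hD
  have ht2 : Real.sqrt D ^ 2 = D := Real.sq_sqrt hD.le
  have hsc : Real.sin Θ ^ 2 + c ^ 2 = 1 := Real.sin_sq_add_cos_sq Θ
  -- derivative of D
  have hD' : HasDerivAt (fun x : ℝ => x ^ 2 + 1 + 2 * x * c) (2 * q + 2 * c) q := by
    have h1 : HasDerivAt (fun x : ℝ => x ^ 2 + 1 + 2 * x * c)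
        ((2 : ℕ) * q ^ (2 - 1) + (2 * c) * 1) q := by
      exact (((hasDerivAt_pow 2 q).add_const 1).add
        (((hasDerivAt_id q).const_mul (2 * c)).congr_deriv rfl)).congr_deriv rfl
        |>.congr_of_eventuallyEq (by filter_upwards with x; simp only [id_eq, Pi.add_apply]; ring)
    convert h1 using 1; push_cast; ring
  have hsqrt : HasDerivAt (fun x : ℝ => Real.sqrt (x ^ 2 + 1 + 2 * x * c))
      ((2 * q + 2 * c) / (2 * Real.sqrt D)) q := hD'.sqrt (by rw [← hDdef]; exact hD.ne')
  have hnum : HasDerivAt (fun x : ℝ => x + c) 1 q := (hasDerivAt_id q).add_const c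
  have hfd : HasDerivAt (fun x : ℝ => (x + c) / Real.sqrt (x ^ 2 + 1 + 2 * x * c))
      ((1 * Real.sqrt D - (q + c) * ((2 * q + 2 * c) / (2 * Real.sqrt D))) / (Real.sqrt D) ^ 2)
      q := by
    have := hnum.div hsqrt (by rw [← hDdef]; exact ht.ne')
    exact this
  set f := (q + c) / Real.sqrt D with hf
  have hf2 : 1 - f ^ 2 = Real.sin Θ ^ 2 / D := by
    rw [hf, div_pow, ht2]
    field_simp
    nlinarith [hsc]
  have hf2pos : 0 < 1 - f ^ 2 := by rw [hf2]; positivity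
  have hf1 : f ≠ 1 := by intro h; rw [h] at hf2pos; norm_num at hf2pos
  have hfm1 : f ≠ -1 := by intro h; rw [h] at hf2pos; norm_num at hf2pos
  have hsq1f : Real.sqrt (1 - f ^ 2) = Real.sin Θ / Real.sqrt D := by
    rw [hf2, Real.sqrt_div (sq_nonneg _), Real.sqrt_sq hs.le]
  have harc : HasDerivAt (fun x : ℝ => Real.arccos ((x + c) / Real.sqrt (x ^ 2 + 1 + 2 * x * c)))
      (-(1 / Real.sqrt (1 - f ^ 2)) *
        ((1 * Real.sqrt D - (q + c) * ((2 * q + 2 * c) / (2 * Real.sqrt D))) / (Real.sqrt D) ^ 2))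
      q := by
    have := (Real.hasDerivAt_arccos hfm1 hf1).comp q hfd
    exact this
  have h2 := harc.const_mul 2
  simp only [ratioAngle]
  refine h2.congr_deriv (Eq.symm ?_)
  rw [hsq1f]
  have hs' : Real.sin Θ ≠ 0 := hs.ne'
  have h3 : Real.sqrt D * Real.sqrt D = D := Real.mul_self_sqrt hD.le
  field_simp
  linear_combination (D - Real.sin Θ ^ 2) * h3 + D * hDdef - D * hsc

/-- For `Θ ∈ (0, π − ε]` and conformal factors `u_v, u_w` (with
`q = e^{u_v − u_w}`), the derivative `∂α/∂u_w` satisfies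
`0 < ∂α/∂u_w ≤ C·α` with a constant `C` depending only on `ε`. -/
theorem stmt19 (ε : ℝ) (hε : ε ∈ Set.Ioo 0 Real.pi) :
    ∃ C : ℝ, 0 < C ∧ ∀ Θ ∈ Set.Ioc 0 (Real.pi - ε), ∀ uv uw : ℝ,
      0 < deriv (fun u => ratioAngle Θ (Real.exp (uv - u))) uw ∧
      deriv (fun u => ratioAngle Θ (Real.exp (uv - u))) uw ≤
        C * ratioAngle Θ (Real.exp (uv - uw)) := by
  have hsε : 0 < Real.sin ε := Real.sin_pos_of_pos_of_lt_pi hε.1 hε.2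
  refine ⟨(Real.sin ε)⁻¹, inv_pos.2 hsε, ?_⟩
  intro Θ hΘ uv uw
  have hΘ' : Θ ∈ Set.Ioo 0 Real.pi := ⟨hΘ.1, lt_of_le_of_lt hΘ.2 (by linarith [hε.1])⟩
  have hs : 0 < Real.sin Θ := Real.sin_pos_of_pos_of_lt_pi hΘ'.1 hΘ'.2
  set q := Real.exp (uv - uw) with hq
  have hqpos : 0 < q := Real.exp_pos _
  set c := Real.cos Θ with hc
  set D := q ^ 2 + 1 + 2 * q * c with hDdef
  have hD : 0 < D := Dpos q hs
  have ht : 0 < Real.sqrt D := Real.sqrt_pos.2 hD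
  have h3 : Real.sqrt D * Real.sqrt D = D := Real.mul_self_sqrt hD.le
  -- the derivative
  have hexp : HasDerivAt (fun u : ℝ => Real.exp (uv - u)) (Real.exp (uv - uw) * (-1)) uw :=
    ((hasDerivAt_id uw).const_sub uv).exp
  have hcomp : HasDerivAt (fun u => ratioAngle Θ (Real.exp (uv - u)))
      (-(2 * Real.sin Θ / D) * (Real.exp (uv - uw) * (-1))) uw :=
    by have := (hasDeriv_ratioAngle hΘ' q).comp uw hexp; exact this
  have hderiv : deriv (fun u => ratioAngle Θ (Real.exp (uv - u))) uw = 2 * Real.sin Θ * q / D := by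
    rw [hcomp.deriv, ← hq]; ring
  rw [hderiv]
  constructor
  · positivity
  -- lower bound for the angle
  have hf2 : 1 - ((q + c) / Real.sqrt D) ^ 2 = Real.sin Θ ^ 2 / D := by
    rw [div_pow, Real.sq_sqrt hD.le]
    field_simp
    nlinarith [Real.sin_sq_add_cos_sq Θ]
  have halpha : 2 * (Real.sin Θ / Real.sqrt D) ≤ ratioAngle Θ q := by
    rw [ratioAngle, ← hDdef, ← hc]
    have h1 : Real.sin (Real.arccos ((q + c) / Real.sqrt D)) ≤
        Real.arccos ((q + c) / Real.sqrt D) :=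
      Real.sin_le (Real.arccos_nonneg _)
    rw [Real.sin_arccos, hf2, Real.sqrt_div (sq_nonneg _), Real.sqrt_sq hs.le] at h1
    linarith
  -- D ≥ q² sin² ε
  have hcos : -Real.cos ε ≤ c := by
    rw [hc, ← Real.cos_pi_sub]
    exact Real.cos_le_cos_of_nonneg_of_le_pi hΘ'.1.le (by linarith [hε.1, Real.pi_pos]) hΘ.2
  have hDq : q ^ 2 * Real.sin ε ^ 2 ≤ D := by
    have := Real.sin_sq_add_cos_sq ε
    nlinarith [sq_nonneg (q * Real.cos ε - 1), hqpos]
  have hqt : q * Real.sin ε ≤ Real.sqrt D := by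
    have h4 : q * Real.sin ε = Real.sqrt (q ^ 2 * Real.sin ε ^ 2) := by
      rw [Real.sqrt_mul (sq_nonneg q), Real.sqrt_sq hqpos.le, Real.sqrt_sq hsε.le]
    rw [h4]
    exact Real.sqrt_le_sqrt hDq
  -- conclude
  have key : Real.sin ε * (2 * Real.sin Θ * q / D) ≤ 2 * (Real.sin Θ / Real.sqrt D) := by
    rw [← mul_div_assoc, ← mul_div_assoc, div_le_div_iff₀ hD ht]
    nlinarith [mul_le_mul_of_nonneg_left hqt
      (by positivity : (0:ℝ) ≤ 2 * Real.sin Θ * Real.sqrt D), h3]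
  calc 2 * Real.sin Θ * q / D = (Real.sin ε)⁻¹ * (Real.sin ε * (2 * Real.sin Θ * q / D)) := by
        rw [inv_mul_cancel_left₀ hsε.ne']
    _ ≤ (Real.sin ε)⁻¹ * ratioAngle Θ q :=
        mul_le_mul_of_nonneg_left (key.trans halpha) (inv_pos.2 hsε).le
end
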